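/- If X^n + 1 has a divisor in F_2[X] of the form X^k + a_{k−1}X^{k−1} + ⋯ + a_2 X^2 + a_0 (i.e., a degree-k divisor whose coefficient of X is zero), then the inverse function F_inv on F_{2^n} is not k-th order sum-free. -/

import Mathlib

/-!
Let `φ(x) = x²` be the Frobenius of `F_{2^n}`: an `F_2`-linear map with minimal polynomial
`Xⁿ + 1`. Put `E = ker f(φ)` and write `Xⁿ + 1 = f g`. The range of `g(φ)` lies in `E`, and the
kernels of `f(φ)` and `g(φ)` lie in the root sets of the linearized polynomials
`L_f = ∑ fᵢ X^{2^i}` and `L_g`, of degrees `2^{deg f}` and `2^{deg g}`. Counting dimensions gives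
`dim E = deg f = k`, hence `L_f = ∏_{x ∈ E} (X - x)`. As `0 ∈ E`, the coefficient of `X²` in this
product is `∏_{x ∈ E ∖ 0} x · ∑_{x ∈ E} x⁻¹`, while in `L_f` it is `f₁ = 0`. So `F_inv` sums to
zero over the `k`-dimensional subspace `E`.
-/

open scoped Classical
open Polynomial

noncomputable instance (n : ℕ) : Fintype (GaloisField 2 n) := Fintype.ofFinite _

/-- `F : F_{2^n} → F_{2^n}` is `k`-th order sum-free if it sums to a nonzero value over
every `k`-dimensional affine `F_2`-subspace (coset `v + E`). -/
def KthOrderSumFree (n k : ℕ) (F : GaloisField 2 n → GaloisField 2 n) : Prop :=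
  ∀ (v : GaloisField 2 n) (E : Submodule (ZMod 2) (GaloisField 2 n)),
    Module.finrank (ZMod 2) E = k →
      (∑ x ∈ Finset.univ.filter (fun x => x ∈ E), F (v + x)) ≠ 0

open Finset Module LinearMap FiniteField

theorem LinearMap.finrank_le_finrank_ker_add_finrank_ker_of_comp_eq_zero {K V W U : Type*}
    [DivisionRing K] [AddCommGroup V] [Module K V] [AddCommGroup W] [Module K W]
    [AddCommGroup U] [Module K U] [FiniteDimensional K V] [FiniteDimensional K W]
    {A : W →ₗ[K] U} {B : V →ₗ[K] W} (h : A ∘ₗ B = 0) :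
    finrank K V ≤ finrank K (ker A) + finrank K (ker B) := by
  have hrange : range B ≤ ker A := range_le_ker_iff.mpr h
  have hrank := B.finrank_range_add_finrank_ker
  have hmono := Submodule.finrank_mono hrange
  omega

theorem Polynomial.coeff_one_prod_X_sub_C {K : Type*} [Field K] {t : Finset K} (ht : 0 ∉ t) :
    (∏ x ∈ t, (X - C x)).coeff 1 = -(∏ x ∈ t, -x) * ∑ x ∈ t, x⁻¹ := by
  induction t using Finset.induction_on with
  | empty => simp [coeff_one]
  | insert a t ha ih =>
    have ha0 : a ≠ 0 := fun h => ht (h ▸ mem_insert_self a t)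
    have hcoeff0 : (∏ x ∈ t, (X - C x)).coeff 0 = ∏ x ∈ t, -x := by
      simp [coeff_zero_eq_eval_zero, eval_prod]
    rw [prod_insert ha, prod_insert ha, sum_insert ha, sub_mul, coeff_sub, coeff_C_mul,
      coeff_X_mul, hcoeff0, ih (fun h => ht (mem_insert_of_mem h))]
    field_simp
    ring

theorem Polynomial.sum_inv_eq_zero_of_coeff_two_prod_X_sub_C {K : Type*} [Field K]
    {s : Finset K} (hs : 0 ∈ s) (h : (∏ x ∈ s, (X - C x)).coeff 2 = 0) :
    ∑ x ∈ s, x⁻¹ = 0 := by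
  rw [← mul_prod_erase s _ hs, map_zero, sub_zero, coeff_X_mul,
    coeff_one_prod_X_sub_C (notMem_erase 0 s)] at h
  have hprod : ∏ x ∈ s.erase 0, -x ≠ 0 :=
    prod_ne_zero_iff.mpr fun x hx => neg_ne_zero.mpr (ne_of_mem_erase hx)
  rw [← add_sum_erase s _ hs, inv_zero, zero_add]
  simpa [hprod] using h

theorem FiniteField.pow_card_sub_two_eq_inv {K : Type*} [Field K] [Fintype K]
    (hK : 2 < Fintype.card K) (x : K) : x ^ (Fintype.card K - 2) = x⁻¹ := by
  rcases eq_or_ne x 0 with rfl | hx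
  · rw [zero_pow (by omega), inv_zero]
  · refine eq_inv_of_mul_eq_one_left ?_
    rw [← pow_succ, show Fintype.card K - 2 + 1 = Fintype.card K - 1 by omega,
      pow_card_sub_one_eq_one x hx]

section Linearized

variable {K L : Type*} [Field K] [Fintype K] [Field L] [Algebra K L]

variable (L) in
noncomputable def linearizedPoly (g : K[X]) : L[X] :=
  ∑ i ∈ range (g.natDegree + 1), C (algebraMap K L (g.coeff i)) * X ^ (Fintype.card K ^ i)

theorem eval_linearizedPoly (g : K[X]) (x : L) :
    (linearizedPoly L g).eval x = aeval (frobeniusAlgHom K L).toLinearMap g x := by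
  simp [linearizedPoly, aeval_eq_sum_range, eval_finsetSum, Module.End.pow_apply,
    coe_frobeniusAlgHom, pow_iterate, Algebra.smul_def]

theorem coeff_linearizedPoly_card_pow (g : K[X]) (i : ℕ) :
    (linearizedPoly L g).coeff (Fintype.card K ^ i) = algebraMap K L (g.coeff i) := by
  have hinj := Nat.pow_right_injective (Fintype.one_lt_card (α := K))
  rw [linearizedPoly, finsetSum_coeff, sum_eq_single i]
  · simp
  · intro j _ hji
    simp [hinj.ne hji.symm]
  · intro hi
    simp [coeff_eq_zero_of_natDegree_lt (show g.natDegree < i by simpa using hi)]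

theorem linearizedPoly_eq_X_pow_add {g : K[X]} (hg : g.Monic) :
    linearizedPoly L g = X ^ (Fintype.card K ^ g.natDegree) +
      ∑ i ∈ range g.natDegree, C (algebraMap K L (g.coeff i)) * X ^ (Fintype.card K ^ i) := by
  rw [linearizedPoly, sum_range_succ, hg.coeff_natDegree, map_one, C_1, one_mul, add_comm]

theorem degree_sum_range_C_mul_X_card_pow_lt (g : K[X]) :
    (∑ i ∈ range g.natDegree, C (algebraMap K L (g.coeff i)) * X ^ (Fintype.card K ^ i)).degree
      < ↑(Fintype.card K ^ g.natDegree) :=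
  (degree_sum_le _ _).trans_lt <| (Finset.sup_lt_iff (WithBot.bot_lt_coe _)).mpr fun i hi =>
    (degree_C_mul_X_pow_le _ _).trans_lt <| by
      exact_mod_cast Nat.pow_lt_pow_right Fintype.one_lt_card (mem_range.mp hi)

theorem linearizedPoly_monic {g : K[X]} (hg : g.Monic) : (linearizedPoly L g).Monic := by
  rw [linearizedPoly_eq_X_pow_add hg]
  exact monic_X_pow_add (degree_sum_range_C_mul_X_card_pow_lt g)

theorem natDegree_linearizedPoly {g : K[X]} (hg : g.Monic) :
    (linearizedPoly L g).natDegree = Fintype.card K ^ g.natDegree := by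
  rw [linearizedPoly_eq_X_pow_add hg, natDegree_add_eq_left_of_degree_lt
    (by rw [degree_X_pow]; exact degree_sum_range_C_mul_X_card_pow_lt g), natDegree_X_pow]

theorem mem_roots_linearizedPoly {g : K[X]} (hg : g.Monic) {x : L}
    (hx : x ∈ ker (aeval (frobeniusAlgHom K L).toLinearMap g)) :
    x ∈ (linearizedPoly L g).roots := by
  rw [mem_roots (linearizedPoly_monic hg).ne_zero, IsRoot.def, eval_linearizedPoly]
  exact hx

variable [Fintype L]

theorem card_filter_mem_eq_card_pow_finrank (E : Submodule K L) :
    #(univ.filter (· ∈ E)) = Fintype.card K ^ finrank K E := by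
  rw [← Fintype.card_subtype, ← card_eq_pow_finrank]

theorem finrank_ker_aeval_frobeniusAlgHom_le {g : K[X]} (hg : g.Monic) :
    finrank K (ker (aeval (frobeniusAlgHom K L).toLinearMap g)) ≤ g.natDegree := by
  have hcard := card_le_degree_of_subset_roots (p := linearizedPoly L g)
    (Z := univ.filter (· ∈ ker (aeval (frobeniusAlgHom K L).toLinearMap g)))
    fun x hx => mem_roots_linearizedPoly hg (mem_filter.mp hx).2
  rw [card_filter_mem_eq_card_pow_finrank, natDegree_linearizedPoly hg] at hcard
  exact (Nat.pow_le_pow_iff_right Fintype.one_lt_card).mp hcard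

theorem prod_X_sub_C_ker_aeval_frobeniusAlgHom {g : K[X]} (hg : g.Monic)
    (hdim : finrank K (ker (aeval (frobeniusAlgHom K L).toLinearMap g)) = g.natDegree) :
    ∏ x ∈ univ.filter (· ∈ ker (aeval (frobeniusAlgHom K L).toLinearMap g)), (X - C x) =
      linearizedPoly L g := by
  set s := univ.filter (· ∈ ker (aeval (frobeniusAlgHom K L).toLinearMap g))
  have hle : s.val ≤ (linearizedPoly L g).roots :=
    (Multiset.le_iff_subset s.nodup).mpr fun x hx => mem_roots_linearizedPoly hg (mem_filter.mp hx).2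
  have hcard : #s = (linearizedPoly L g).natDegree := by
    rw [card_filter_mem_eq_card_pow_finrank, natDegree_linearizedPoly hg, hdim]
  have hroots : s.val = (linearizedPoly L g).roots :=
    Multiset.eq_of_le_of_card_le hle ((card_roots' _).trans_eq hcard.symm)
  rw [prod_eq_multiset_prod, hroots, prod_multiset_X_sub_C_of_monic_of_roots_card_eq
    (linearizedPoly_monic hg) (hroots ▸ hcard)]

theorem finrank_ker_aeval_frobeniusAlgHom_of_dvd {f : K[X]} (hf : f.Monic)
    (hdvd : f ∣ X ^ finrank K L - 1) :
    finrank K (ker (aeval (frobeniusAlgHom K L).toLinearMap f)) = f.natDegree := by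
  have : FiniteDimensional K L := Module.Finite.of_finite
  obtain ⟨g, hfg⟩ := hdvd
  have hmonic : (X ^ finrank K L - 1 : K[X]).Monic := monic_X_pow_sub_C 1 finrank_pos.ne'
  have hg : g.Monic := hf.of_mul_monic_left (hfg ▸ hmonic)
  have hdeg : f.natDegree + g.natDegree = finrank K L := by
    rw [← natDegree_mul hf.ne_zero hg.ne_zero, ← hfg, ← C_1, natDegree_X_pow_sub_C]
  have hcomp : aeval (frobeniusAlgHom K L).toLinearMap f ∘ₗ
      aeval (frobeniusAlgHom K L).toLinearMap g = 0 := by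
    rw [← Module.End.mul_eq_comp, ← map_mul, ← hfg, ← minpoly_frobeniusAlgHom, minpoly.aeval]
  have hlower := finrank_le_finrank_ker_add_finrank_ker_of_comp_eq_zero hcomp
  have hupper_f := finrank_ker_aeval_frobeniusAlgHom_le (L := L) hf
  have hupper_g := finrank_ker_aeval_frobeniusAlgHom_le (L := L) hg
  omega

end Linearized

/-- If `X^n + 1` has a monic degree-`k` divisor in `F_2[X]` whose coefficient of `X` is
zero, then `F_inv(x) = x^(2^n - 2)` is not `k`-th order sum-free on `F_{2^n}`. -/
theorem not_sumFree_of_dvd (n k : ℕ) (hk : 2 ≤ k) (hkn : k ≤ n - 1)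
    (f : (ZMod 2)[X]) (hmonic : f.Monic) (hdeg : f.natDegree = k)
    (hcoeff : f.coeff 1 = 0) (hdvd : f ∣ (X ^ n + 1 : (ZMod 2)[X])) :
    ¬ KthOrderSumFree n k (fun x => x ^ (2 ^ n - 2)) := by
  have hn : n ≠ 0 := by omega
  have hdvd' : f ∣ X ^ finrank (ZMod 2) (GaloisField 2 n) - 1 := by
    rwa [GaloisField.finrank 2 hn, CharTwo.sub_eq_add]
  have hdimE := finrank_ker_aeval_frobeniusAlgHom_of_dvd hmonic hdvd'
  have hinv (x : GaloisField 2 n) : x ^ (2 ^ n - 2) = x⁻¹ := by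
    have hcard : Fintype.card (GaloisField 2 n) = 2 ^ n := by
      rw [← Nat.card_eq_fintype_card, GaloisField.card 2 n hn]
    rw [← hcard]
    exact pow_card_sub_two_eq_inv (hcard ▸ Nat.lt_two_pow_self.trans_le' (by omega)) x
  intro hsumFree
  refine hsumFree 0 _ (hdimE.trans hdeg) ?_
  simp only [zero_add, hinv]
  refine sum_inv_eq_zero_of_coeff_two_prod_X_sub_C (by simp) ?_
  rw [prod_X_sub_C_ker_aeval_frobeniusAlgHom hmonic hdimE]
  simpa [hcoeff] using coeff_linearizedPoly_card_pow (L := GaloisField 2 n) f 1
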